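/- Let A : B₁⁺ → 2×2 real matrices be measurable and uniformly elliptic. Then for each x ∈ B₁⁺ and each nonzero vector p ∈ ℝ² there is a symmetric positive-definite matrix M with det M = 1, eigenvalues bounded in terms of the ellipticity constants of A, and Mp = A(x)p. -/

import Mathlib

open Matrix

set_option maxHeartbeats 1000000 in
/-- pointwise claim: for all ellipticity constants `0 < λ ≤ Λ` there
are eigenvalue bounds `0 < c ≤ C`, depending only on `λ, Λ`, such that: for every
2×2 matrix `A` with `λ|ξ|² ≤ Aξ·ξ` and `|Aξ| ≤ Λ|ξ|`, and every `p ≠ 0`, there is a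
symmetric positive definite matrix `M` with `det M = 1`, `Mp = Ap`, and
`c|ξ|² ≤ ξᵀMξ ≤ C|ξ|²` for all `ξ`. -/
theorem stmt19 (lam Lam : ℝ) (hlam : 0 < lam) (hle : lam ≤ Lam) :
    ∃ c C : ℝ, 0 < c ∧ c ≤ C ∧
      ∀ A : Matrix (Fin 2) (Fin 2) ℝ,
        (∀ ξ : Fin 2 → ℝ, lam * (ξ ⬝ᵥ ξ) ≤ ξ ⬝ᵥ A.mulVec ξ) →
        (∀ ξ : Fin 2 → ℝ, Real.sqrt (A.mulVec ξ ⬝ᵥ A.mulVec ξ) ≤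
          Lam * Real.sqrt (ξ ⬝ᵥ ξ)) →
        ∀ p : Fin 2 → ℝ, p ≠ 0 →
          ∃ M : Matrix (Fin 2) (Fin 2) ℝ,
            M.IsSymm ∧ M.PosDef ∧ M.det = 1 ∧ M.mulVec p = A.mulVec p ∧
            ∀ ξ : Fin 2 → ℝ,
              c * (ξ ⬝ᵥ ξ) ≤ ξ ⬝ᵥ M.mulVec ξ ∧ ξ ⬝ᵥ M.mulVec ξ ≤ C * (ξ ⬝ᵥ ξ) := by
  have hLam : 0 < Lam := hlam.trans_le hle
  have hL2 : (0:ℝ) < Lam ^ 2 + 1 := by positivity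
  refine ⟨lam / (Lam ^ 2 + 1), (Lam ^ 2 + 1) / lam, by positivity, ?_, ?_⟩
  · rw [div_le_div_iff₀ hL2 hlam]
    nlinarith [sq_nonneg (Lam ^ 2 + 1 - lam)]
  intro A h1 h2 p hp
  set p0 := p 0 with hp0d
  set p1 := p 1 with hp1d
  set q0 := A.mulVec p 0 with hq0d
  set q1 := A.mulVec p 1 with hq1d
  have hP : p = ![p0, p1] := by
    funext j; fin_cases j <;> rfl
  have hA : A.mulVec p = ![q0, q1] := by
    funext j; fin_cases j <;> rfl
  have hpp : 0 < p0 * p0 + p1 * p1 := by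
    rcases (add_nonneg (mul_self_nonneg p0) (mul_self_nonneg p1)).lt_or_eq with h | h
    · exact h
    · exfalso
      have h0 : p0 = 0 := by
        have : p0 * p0 = 0 := le_antisymm (by nlinarith [mul_self_nonneg p1]) (mul_self_nonneg p0)
        exact mul_self_eq_zero.mp this
      have h1' : p1 = 0 := by
        have : p1 * p1 = 0 := le_antisymm (by nlinarith [mul_self_nonneg p0]) (mul_self_nonneg p1)
        exact mul_self_eq_zero.mp this
      apply hp
      rw [hP, h0, h1']
      funext j; fin_cases j <;> rfl
  have hs1 : lam * (p0 * p0 + p1 * p1) ≤ q0 * p0 + q1 * p1 := by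
    have h := h1 p
    simp only [dotProduct, Fin.sum_univ_two, ← hp0d, ← hp1d, ← hq0d, ← hq1d] at h
    linarith
  have hq : q0 * q0 + q1 * q1 ≤ Lam ^ 2 * (p0 * p0 + p1 * p1) := by
    have h := h2 p
    simp only [dotProduct, Fin.sum_univ_two, ← hp0d, ← hp1d, ← hq0d, ← hq1d] at h
    have e1 : Real.sqrt (q0 * q0 + q1 * q1) ^ 2 = q0 * q0 + q1 * q1 :=
      Real.sq_sqrt (add_nonneg (mul_self_nonneg _) (mul_self_nonneg _))
    have e2 : Real.sqrt (p0 * p0 + p1 * p1) ^ 2 = p0 * p0 + p1 * p1 :=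
      Real.sq_sqrt (add_nonneg (mul_self_nonneg _) (mul_self_nonneg _))
    nlinarith [Real.sqrt_nonneg (q0 * q0 + q1 * q1), Real.sqrt_nonneg (p0 * p0 + p1 * p1),
      mul_self_le_mul_self (Real.sqrt_nonneg (q0 * q0 + q1 * q1)) h]
  clear h1 h2 hp hp0d hp1d hq0d hq1d
  clear_value p0 p1 q0 q1
  set s := q0 * p0 + q1 * p1 with hsd
  have hs_pos : 0 < s := lt_of_lt_of_le (by positivity) hs1
  clear_value s
  refine ⟨!![(q0 ^ 2 + p1 ^ 2) / s, (q0 * q1 - p0 * p1) / s;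
            (q0 * q1 - p0 * p1) / s, (q1 ^ 2 + p0 ^ 2) / s], ?_, ?_, ?_, ?_, ?_⟩
  case _ =>
    ext i j
    fin_cases i <;> fin_cases j <;> rfl
  case _ =>
    rw [Matrix.posDef_iff_dotProduct_mulVec]
    constructor
    · rw [Matrix.IsHermitian]
      ext i j
      fin_cases i <;> fin_cases j <;> simp
    · intro x hx
      have hxx : 0 < x 0 * x 0 + x 1 * x 1 := by
        rcases (add_nonneg (mul_self_nonneg (x 0)) (mul_self_nonneg (x 1))).lt_or_eq with h | h
        · exact h
        · exfalso
          apply hx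
          have h0 := mul_self_eq_zero.mp
            (le_antisymm (by nlinarith [mul_self_nonneg (x 1)]) (mul_self_nonneg (x 0)))
          have h1' := mul_self_eq_zero.mp
            (le_antisymm (by nlinarith [mul_self_nonneg (x 0)]) (mul_self_nonneg (x 1)))
          funext j; fin_cases j <;> assumption
      simp only [star_trivial, dotProduct, Matrix.mulVec, Fin.sum_univ_two,
        Matrix.cons_val_zero, Matrix.cons_val_one, Matrix.head_cons, Matrix.of_apply,
        Matrix.cons_val', Matrix.empty_val', Matrix.cons_val_fin_one, Matrix.vecHead, Matrix.vecTail]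
      have key : x 0 * ((q0 ^ 2 + p1 ^ 2) / s * x 0 + (q0 * q1 - p0 * p1) / s * x 1) +
          x 1 * ((q0 * q1 - p0 * p1) / s * x 0 + (q1 ^ 2 + p0 ^ 2) / s * x 1) =
          ((q0 * x 0 + q1 * x 1) ^ 2 + (p1 * x 0 - p0 * x 1) ^ 2) / s := by
        field_simp
        ring
      rw [key]
      have hnum : 0 < (q0 * x 0 + q1 * x 1) ^ 2 + (p1 * x 0 - p0 * x 1) ^ 2 := by
        rcases eq_or_ne (q0 * x 0 + q1 * x 1) 0 with h0 | h0
        · rcases eq_or_ne (p1 * x 0 - p0 * x 1) 0 with h0' | h0'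
          · exfalso
            have e0 : s * x 0 = p0 * (q0 * x 0 + q1 * x 1) + q1 * (p1 * x 0 - p0 * x 1) := by
              rw [hsd]; ring
            have e1 : s * x 1 = p1 * (q0 * x 0 + q1 * x 1) - q0 * (p1 * x 0 - p0 * x 1) := by
              rw [hsd]; ring
            rw [h0, h0'] at e0 e1
            simp only [mul_zero, add_zero, sub_zero, zero_add] at e0 e1
            have hx0 := (mul_eq_zero.mp e0).resolve_left hs_pos.ne'
            have hx1 := (mul_eq_zero.mp e1).resolve_left hs_pos.ne'
            rw [hx0, hx1] at hxx
            norm_num at hxx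
          · positivity
        · positivity
      positivity
  case _ =>
    rw [Matrix.det_fin_two_of]
    field_simp
    rw [hsd]
    ring
  case _ =>
    rw [hA, hP]
    funext j
    fin_cases j <;>
      simp only [Matrix.mulVec, dotProduct, Fin.sum_univ_two, Matrix.cons_val_zero,
        Matrix.cons_val_one, Matrix.head_cons, Matrix.of_apply, Matrix.cons_val',
        Matrix.empty_val', Matrix.cons_val_fin_one, Fin.zero_eta, Fin.mk_one]
    · field_simp
      rw [hsd]
      ring
    · field_simp
      rw [hsd]
      ring
  case _ =>
    intro ξ
    have key : ξ ⬝ᵥ (!![(q0 ^ 2 + p1 ^ 2) / s, (q0 * q1 - p0 * p1) / s;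
            (q0 * q1 - p0 * p1) / s, (q1 ^ 2 + p0 ^ 2) / s]).mulVec ξ =
        ((q0 * ξ 0 + q1 * ξ 1) ^ 2 + (p1 * ξ 0 - p0 * ξ 1) ^ 2) / s := by
      simp only [Matrix.mulVec, dotProduct, Fin.sum_univ_two, Matrix.cons_val_zero,
        Matrix.cons_val_one, Matrix.head_cons, Matrix.of_apply, Matrix.cons_val',
        Matrix.empty_val', Matrix.cons_val_fin_one]
      field_simp
      ring
    have hdp : ξ ⬝ᵥ ξ = ξ 0 * ξ 0 + ξ 1 * ξ 1 := by
      simp [dotProduct, Fin.sum_univ_two]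
    rw [key, hdp]
    set x0 := ξ 0
    set x1 := ξ 1
    clear_value x0 x1
    clear key hdp hP hA
    have hN : 0 ≤ (q0 * x0 + q1 * x1) ^ 2 + (p1 * x0 - p0 * x1) ^ 2 :=
      add_nonneg (sq_nonneg _) (sq_nonneg _)
    have hxx : 0 ≤ x0 * x0 + x1 * x1 :=
      add_nonneg (mul_self_nonneg _) (mul_self_nonneg _)
    constructor
    · rw [div_mul_eq_mul_div, div_le_div_iff₀ hL2 hs_pos]
      have F : s ^ 2 * (x0 * x0 + x1 * x1) ≤
          ((q0 * x0 + q1 * x1) ^ 2 + (p1 * x0 - p0 * x1) ^ 2) *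
            ((q0 * q0 + q1 * q1) + (p0 * p0 + p1 * p1)) := by
        have i0 : (s * x0) ^ 2 = (p0 * (q0 * x0 + q1 * x1) + q1 * (p1 * x0 - p0 * x1)) ^ 2 := by
          rw [hsd]; ring
        have i1 : (s * x1) ^ 2 = (p1 * (q0 * x0 + q1 * x1) - q0 * (p1 * x0 - p0 * x1)) ^ 2 := by
          rw [hsd]; ring
        nlinarith [sq_nonneg (p0 * (p1 * x0 - p0 * x1) - q1 * (q0 * x0 + q1 * x1)),
          sq_nonneg (p1 * (p1 * x0 - p0 * x1) + q0 * (q0 * x0 + q1 * x1)), i0, i1]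
      nlinarith [F, hpp, hN, hs_pos,
        mul_le_mul_of_nonneg_right hs1 (mul_nonneg hxx hs_pos.le),
        mul_le_mul_of_nonneg_left hq hN]
    · rw [div_le_iff₀ hs_pos, div_mul_eq_mul_div, div_mul_eq_mul_div, le_div_iff₀ hlam]
      have CS1 : (q0 * x0 + q1 * x1) ^ 2 ≤ (q0 * q0 + q1 * q1) * (x0 * x0 + x1 * x1) := by
        nlinarith [sq_nonneg (q0 * x1 - q1 * x0)]
      have CS2 : (p1 * x0 - p0 * x1) ^ 2 ≤ (p0 * p0 + p1 * p1) * (x0 * x0 + x1 * x1) := by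
        nlinarith [sq_nonneg (p0 * x0 + p1 * x1)]
      nlinarith [mul_le_mul_of_nonneg_left (add_le_add CS1 CS2) hlam.le,
        mul_le_mul_of_nonneg_right hq (mul_nonneg hlam.le hxx),
        mul_le_mul_of_nonneg_right hs1 (mul_nonneg hL2.le hxx)]
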